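/- arXiv:1609.05231 — 2 statements merged into one kernel-verified Lean document; each statement's English description precedes it below -/
import Mathlib

section
/- Let 0 < λ ≤ Λ. There exists a constant c₀ > 0 depending only on λ and Λ with the following property: for all measurable a, b : (0,1) → ℝ with λ ≤ a, b ≤ Λ a.e., writing A := 1/a, B := 1/b, γ_A := (∫₀¹ t·A)/(∫₀¹ A), γ_B := (∫₀¹ t·B)/(∫₀¹ B), and E'(x) := B(x)(x - γ_B) - A(x)(x - γ_A), if η := γ_A - γ_B ≥ 0, then η ≤ c₀·(∫₀¹ E'(x)² dx)^{1/3}. -/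
/-!
Both weighted means `γ_A, γ_B` lie in `[0, 1]`. On `(γ_B, γ_A)` the two terms of
`E'(x) = B(x)(x - γ_B) + A(x)(γ_A - x)` are nonnegative, and since `A, B ≥ 1/Λ` their sum is
at least `η / Λ`. Integrating `E'²` over this interval of length `η` gives `η³ / Λ² ≤ ∫₀¹ E'²`.
-/

open MeasureTheory Real Set

noncomputable def gammaOf (A : ℝ → ℝ) : ℝ :=
  (∫ t in (0:ℝ)..1, t * A t) / (∫ t in (0:ℝ)..1, A t)

lemma integral_zero_one_eq_setIntegral_Ioo (f : ℝ → ℝ) :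
    ∫ t in (0:ℝ)..1, f t = ∫ t in Ioo (0:ℝ) 1, f t := by
  rw [intervalIntegral.integral_of_le zero_le_one, integral_Ioc_eq_integral_Ioo]

lemma gammaOf_mem_Icc {A : ℝ → ℝ} (hA : IntegrableOn A (Ioo 0 1))
    (hA0 : 0 ≤ᵐ[volume.restrict (Ioo 0 1)] A) (hpos : 0 < ∫ t in (0:ℝ)..1, A t) :
    gammaOf A ∈ Icc 0 1 := by
  rw [gammaOf, integral_zero_one_eq_setIntegral_Ioo, integral_zero_one_eq_setIntegral_Ioo] at *
  have htA : IntegrableOn (fun t => t * A t) (Ioo 0 1) :=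
    hA.continuousOn_mul_of_subset continuousOn_id isCompact_Icc measurableSet_Ioo
      Ioo_subset_Icc_self
  have hnum_nonneg : 0 ≤ ∫ t in Ioo (0:ℝ) 1, t * A t := by
    refine setIntegral_nonneg_of_ae_restrict ?_
    filter_upwards [hA0, ae_restrict_mem measurableSet_Ioo] with t ht htI
    exact mul_nonneg htI.1.le ht
  have hnum_le : ∫ t in Ioo (0:ℝ) 1, t * A t ≤ ∫ t in Ioo (0:ℝ) 1, A t := by
    refine integral_mono_ae htA hA ?_
    filter_upwards [hA0, ae_restrict_mem measurableSet_Ioo] with t ht htI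
    exact mul_le_of_le_one_left ht htI.2.le
  exact ⟨div_nonneg hnum_nonneg hpos.le, (div_le_one hpos).2 hnum_le⟩

lemma gammaOf_mem_Icc_of_ae_bounds {A : ℝ → ℝ} {m M : ℝ}
    (hA : AEStronglyMeasurable A (volume.restrict (Ioo 0 1)))
    (hm : 0 < m) (hbd : ∀ᵐ t ∂(volume.restrict (Ioo (0:ℝ) 1)), m ≤ A t ∧ A t ≤ M) :
    gammaOf A ∈ Icc 0 1 := by
  have hA0 : 0 ≤ᵐ[volume.restrict (Ioo 0 1)] A := by
    filter_upwards [hbd] with t ht using hm.le.trans ht.1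
  have hint : IntegrableOn A (Ioo 0 1) := by
    refine Integrable.of_bound hA M ?_
    filter_upwards [hbd] with t ht
    exact abs_le.2 ⟨by linarith [ht.1], ht.2⟩
  refine gammaOf_mem_Icc hint hA0 (hm.trans_le ?_)
  rw [integral_zero_one_eq_setIntegral_Ioo]
  simpa using integral_mono_ae (integrable_const m) hint (hbd.mono fun t ht => ht.1)

lemma ae_one_div_bounds {α : Type*} [MeasurableSpace α] {μ : Measure α} {a : α → ℝ}
    {lam Lam : ℝ} (hlam : 0 < lam) (hbd : ∀ᵐ x ∂μ, lam ≤ a x ∧ a x ≤ Lam) :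
    ∀ᵐ x ∂μ, 1 / Lam ≤ 1 / a x ∧ 1 / a x ≤ 1 / lam := by
  filter_upwards [hbd] with x hx
  exact ⟨one_div_le_one_div_of_le (hlam.trans_le hx.1) hx.2, one_div_le_one_div_of_le hlam hx.1⟩

lemma mul_sub_le_mul_sub_sub_mul_sub {m α β x g h : ℝ} (hx : x ∈ Icc g h) (hα : m ≤ α)
    (hβ : m ≤ β) : m * (h - g) ≤ β * (x - g) - α * (x - h) := by
  nlinarith [hx.1, hx.2]

lemma sq_mul_sub_sub_mul_sub_le {M α β x g h : ℝ} (hα : α ∈ Icc 0 M) (hβ : β ∈ Icc 0 M)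
    (hx : x ∈ Icc 0 1) (hg : g ∈ Icc 0 1) (hh : h ∈ Icc 0 1) :
    (β * (x - g) - α * (x - h)) ^ 2 ≤ (2 * M) ^ 2 := by
  have hβg : |β * (x - g)| ≤ M := by
    rw [abs_le]; constructor <;> nlinarith [hβ.1, hβ.2, hx.1, hx.2, hg.1, hg.2]
  have hαh : |α * (x - h)| ≤ M := by
    rw [abs_le]; constructor <;> nlinarith [hα.1, hα.2, hx.1, hx.2, hh.1, hh.2]
  exact sq_le_sq' (by linarith [neg_abs_le (β * (x - g)), le_abs_self (α * (x - h))])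
    (by linarith [le_abs_self (β * (x - g)), neg_abs_le (α * (x - h))])

lemma sq_mul_sub_le_setIntegral_sq {f : ℝ → ℝ} {s : Set ℝ} {c p q : ℝ}
    (hf : IntegrableOn (fun x => f x ^ 2) s) (hsub : Ioo p q ⊆ s) (hc : 0 ≤ c) (hpq : p ≤ q)
    (hle : ∀ᵐ x ∂(volume.restrict (Ioo p q)), c ≤ f x) :
    c ^ 2 * (q - p) ≤ ∫ x in s, f x ^ 2 :=
  calc c ^ 2 * (q - p) = ∫ _ in Ioo p q, c ^ 2 := by
        rw [setIntegral_const, Real.volume_real_Ioo_of_le hpq, smul_eq_mul, mul_comm]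
    _ ≤ ∫ x in Ioo p q, f x ^ 2 :=
        integral_mono_ae (integrable_const _) (hf.mono_set hsub)
          (hle.mono fun x hx => pow_le_pow_left₀ hc hx 2)
    _ ≤ ∫ x in s, f x ^ 2 :=
        setIntegral_mono_set hf (Filter.Eventually.of_forall fun x => sq_nonneg (f x))
          hsub.eventuallyLE

lemma le_rpow_one_div_three_of_pow_three_le {x y : ℝ} (hx : 0 ≤ x) (hy : 0 ≤ y)
    (h : x ^ 3 ≤ y) : x ≤ y ^ ((1:ℝ) / 3) := by
  rw [one_div, Real.le_rpow_inv_iff_of_pos hx hy (by norm_num)]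
  exact_mod_cast h

section GradientGap

variable {A B : ℝ → ℝ} {m M : ℝ}

lemma integrableOn_sq_gradient_sub
    (hA : AEStronglyMeasurable A (volume.restrict (Ioo 0 1)))
    (hB : AEStronglyMeasurable B (volume.restrict (Ioo 0 1))) (hm : 0 < m)
    (hAbd : ∀ᵐ t ∂(volume.restrict (Ioo (0:ℝ) 1)), m ≤ A t ∧ A t ≤ M)
    (hBbd : ∀ᵐ t ∂(volume.restrict (Ioo (0:ℝ) 1)), m ≤ B t ∧ B t ≤ M) :
    IntegrableOn (fun x => (B x * (x - gammaOf B) - A x * (x - gammaOf A)) ^ 2) (Ioo 0 1) := by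
  have hγA := gammaOf_mem_Icc_of_ae_bounds hA hm hAbd
  have hγB := gammaOf_mem_Icc_of_ae_bounds hB hm hBbd
  refine Integrable.of_bound (by fun_prop) ((2 * M) ^ 2) ?_
  filter_upwards [hAbd, hBbd, ae_restrict_mem measurableSet_Ioo] with x hxA hxB hx
  rw [Real.norm_of_nonneg (sq_nonneg _)]
  exact sq_mul_sub_sub_mul_sub_le ⟨hm.le.trans hxA.1, hxA.2⟩ ⟨hm.le.trans hxB.1, hxB.2⟩
    (Ioo_subset_Icc_self hx) hγB hγA

lemma sq_mul_pow_three_le_integral_sq_gradient_sub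
    (hA : AEStronglyMeasurable A (volume.restrict (Ioo 0 1)))
    (hB : AEStronglyMeasurable B (volume.restrict (Ioo 0 1))) (hm : 0 < m)
    (hAbd : ∀ᵐ t ∂(volume.restrict (Ioo (0:ℝ) 1)), m ≤ A t ∧ A t ≤ M)
    (hBbd : ∀ᵐ t ∂(volume.restrict (Ioo (0:ℝ) 1)), m ≤ B t ∧ B t ≤ M) :
    m ^ 2 * (gammaOf A - gammaOf B) ^ 3 ≤
      ∫ x in (0:ℝ)..1, (B x * (x - gammaOf B) - A x * (x - gammaOf A)) ^ 2 := by
  have hint := integrableOn_sq_gradient_sub hA hB hm hAbd hBbd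
  rw [integral_zero_one_eq_setIntegral_Ioo]
  rcases lt_or_ge (gammaOf A) (gammaOf B) with hlt | hle
  · have : (gammaOf A - gammaOf B) ^ 3 < 0 := Odd.pow_neg (by decide) (sub_neg.2 hlt)
    exact (mul_nonpos_of_nonneg_of_nonpos (sq_nonneg m) this.le).trans
      (setIntegral_nonneg measurableSet_Ioo fun x _ => sq_nonneg _)
  have hsub : Ioo (gammaOf B) (gammaOf A) ⊆ Ioo 0 1 := fun x hx =>
    ⟨(gammaOf_mem_Icc_of_ae_bounds hB hm hBbd).1.trans_lt hx.1,
      hx.2.trans_le (gammaOf_mem_Icc_of_ae_bounds hA hm hAbd).2⟩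
  have hlower : ∀ᵐ x ∂(volume.restrict (Ioo (gammaOf B) (gammaOf A))),
      m * (gammaOf A - gammaOf B) ≤ B x * (x - gammaOf B) - A x * (x - gammaOf A) := by
    filter_upwards [ae_restrict_of_ae_restrict_of_subset hsub hAbd,
      ae_restrict_of_ae_restrict_of_subset hsub hBbd, ae_restrict_mem measurableSet_Ioo]
      with x hxA hxB hx
    exact mul_sub_le_mul_sub_sub_mul_sub (Ioo_subset_Icc_self hx) hxA.1 hxB.1
  calc m ^ 2 * (gammaOf A - gammaOf B) ^ 3
      = (m * (gammaOf A - gammaOf B)) ^ 2 * (gammaOf A - gammaOf B) := by ring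
    _ ≤ _ := sq_mul_sub_le_setIntegral_sq hint hsub
        (mul_nonneg hm.le (sub_nonneg.2 hle)) hle hlower

end GradientGap

/-- Lemma 6.1 of the paper: there is a constant `c₀ = c₀(λ,Λ) > 0` such that for all
diffusion coefficients `a, b` with `λ ≤ a, b ≤ Λ` a.e. on `(0,1)`, writing `A = 1/a`,
`B = 1/b`, `γ_A, γ_B` the corresponding constants and
`E'(x) = B(x)(x-γ_B) - A(x)(x-γ_A) = u_a'(x) - u_b'(x)`, if `η := γ_A - γ_B ≥ 0` then
`η ≤ c₀ ‖E'‖_{L²(0,1)}^{2/3} = c₀ (∫₀¹ E'²)^{1/3}`. -/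
theorem stmt2 (lam Lam : ℝ) (hlam : 0 < lam) (hlL : lam ≤ Lam) :
    ∃ c₀ : ℝ, 0 < c₀ ∧
      ∀ a b : ℝ → ℝ, Measurable a → Measurable b →
        (∀ᵐ x ∂(volume.restrict (Ioo (0:ℝ) 1)), lam ≤ a x ∧ a x ≤ Lam) →
        (∀ᵐ x ∂(volume.restrict (Ioo (0:ℝ) 1)), lam ≤ b x ∧ b x ≤ Lam) →
        0 ≤ gammaOf (fun t => 1 / a t) - gammaOf (fun t => 1 / b t) →
        gammaOf (fun t => 1 / a t) - gammaOf (fun t => 1 / b t) ≤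
          c₀ * (∫ x in (0:ℝ)..1,
              ((1 / b x) * (x - gammaOf (fun t => 1 / b t))
                - (1 / a x) * (x - gammaOf (fun t => 1 / a t))) ^ 2) ^ ((1:ℝ)/3) := by
  have hLam : 0 < Lam := hlam.trans_le hlL
  refine ⟨(Lam ^ 2) ^ ((1:ℝ) / 3), by positivity, fun a b ha hb hab hbb hη => ?_⟩
  have key := sq_mul_pow_three_le_integral_sq_gradient_sub
    (A := fun t => 1 / a t) (B := fun t => 1 / b t)
    (measurable_const.div ha).aestronglyMeasurable (measurable_const.div hb).aestronglyMeasurable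
    (one_div_pos.2 hLam) (ae_one_div_bounds hlam hab) (ae_one_div_bounds hlam hbb)
  set η := gammaOf (fun t => 1 / a t) - gammaOf (fun t => 1 / b t)
  set I := ∫ x in (0:ℝ)..1, ((1 / b x) * (x - gammaOf (fun t => 1 / b t))
    - (1 / a x) * (x - gammaOf (fun t => 1 / a t))) ^ 2
  have hI : 0 ≤ I := intervalIntegral.integral_nonneg zero_le_one fun x _ => sq_nonneg _
  have hcube : η ^ 3 ≤ Lam ^ 2 * I :=
    calc η ^ 3 = Lam ^ 2 * ((1 / Lam) ^ 2 * η ^ 3) := by field_simp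
      _ ≤ Lam ^ 2 * I := by gcongr
  rw [← Real.mul_rpow (sq_nonneg Lam) hI]
  exact le_rpow_one_div_three_of_pow_three_le hη (by positivity) hcube
end

section
/- For every integer d ≥ 2, the series ∑_{n ∈ (ℤ₊)^d} 1/((n₁² + n₂² + ⋯ + n_d²)·n₂·n₃⋯n_d), taken over all d-tuples n = (n₁,…,n_d) of positive integers, converges (is finite). -/
/-!
Weighted AM–GM with positive weights `w` summing to `1` and `w i₀ > 1/2` gives
`∑ nᵢ² ≥ ∏ nᵢ ^ (2 wᵢ)`, so the summand is at most `∏ nᵢ ^ (-eᵢ)` with `e i₀ = 2 w i₀ > 1` and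
`eᵢ = 2 wᵢ + 1 > 1` otherwise. That bound is a product of convergent `p`-series.
-/

open Finset

theorem summable_pi_prod_of_nonneg {ι κ : Type*} [Fintype ι] (f : ι → κ → ℝ)
    (hf₀ : ∀ i k, 0 ≤ f i k) (hf : ∀ i, Summable (f i)) :
    Summable fun v : ι → κ => ∏ i, f i (v i) := by
  classical
  refine summable_of_sum_le (c := ∏ i, ∑' k, f i k)
    (fun v => prod_nonneg fun i _ => hf₀ i (v i)) fun u => ?_
  calc ∑ v ∈ u, ∏ i, f i (v i)
      ≤ ∑ v ∈ Fintype.piFinset fun i => u.image (· i), ∏ i, f i (v i) :=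
        sum_le_sum_of_subset_of_nonneg
          (fun v hv => Fintype.mem_piFinset.2 fun i => mem_image_of_mem _ hv)
          fun v _ _ => prod_nonneg fun i _ => hf₀ i (v i)
    _ = ∏ i, ∑ k ∈ u.image (· i), f i k := (prod_univ_sum _ _).symm
    _ ≤ ∏ i, ∑' k, f i k :=
        prod_le_prod (fun i _ => sum_nonneg fun k _ => hf₀ i k)
          fun i _ => (hf i).sum_le_tsum _ fun k _ => hf₀ i k

theorem summable_pnat_prod_rpow_neg {ι : Type*} [Fintype ι] {e : ι → ℝ}
    (he : ∀ i, 1 < e i) :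
    Summable fun n : ι → ℕ+ => ∏ i, ((n i : ℕ) : ℝ) ^ (-e i) :=
  summable_pi_prod_of_nonneg (fun i (m : ℕ+) => ((m : ℕ) : ℝ) ^ (-e i))
    (fun _ _ => Real.rpow_nonneg (Nat.cast_nonneg _) _)
    fun i => (Real.summable_nat_rpow.2 (by linarith [he i])).comp_injective PNat.coe_injective

theorem prod_rpow_le_sum {ι : Type*} (s : Finset ι) {w x : ι → ℝ} (hw : ∀ i ∈ s, 0 ≤ w i)
    (hw₁ : ∑ i ∈ s, w i = 1) (hx : ∀ i ∈ s, 0 ≤ x i) :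
    ∏ i ∈ s, x i ^ w i ≤ ∑ i ∈ s, x i :=
  (Real.geom_mean_le_arith_mean_weighted s w x hw hw₁ hx).trans <|
    sum_le_sum fun i hi =>
      mul_le_of_le_one_left (hx i hi) (hw₁ ▸ single_le_sum hw hi)

theorem exists_weights_gt_half {ι : Type*} [Fintype ι] [DecidableEq ι] (i₀ : ι) :
    ∃ w : ι → ℝ, (∀ i, 0 < w i) ∧ ∑ i, w i = 1 ∧ 1 / 2 < w i₀ := by
  have hc : (0 : ℝ) < Fintype.card ι := Nat.cast_pos.2 (Fintype.card_pos_iff.2 ⟨i₀⟩)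
  refine ⟨fun i => (2 * (Fintype.card ι : ℝ))⁻¹ + if i = i₀ then 1 / 2 else 0,
    fun i => by positivity, ?_, by simpa using hc⟩
  simp only [sum_add_distrib, sum_const, card_univ, nsmul_eq_mul, sum_ite_eq', mem_univ, if_true]
  field_simp
  norm_num

theorem prod_rpow_le_sum_sq_mul_prod_erase {ι : Type*} [Fintype ι] [DecidableEq ι] (i₀ : ι)
    {w x : ι → ℝ} (hw : ∀ i, 0 ≤ w i) (hw₁ : ∑ i, w i = 1) (hx : ∀ i, 0 < x i) :
    ∏ i, x i ^ (2 * w i + if i = i₀ then 0 else 1) ≤ (∑ i, x i ^ 2) * ∏ i ∈ univ.erase i₀, x i := by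
  have hsplit : ∀ i, x i ^ (2 * w i + if i = i₀ then 0 else 1)
      = (x i ^ 2) ^ w i * if i = i₀ then 1 else x i := by
    intro i
    rw [Real.rpow_add (hx i), Real.rpow_mul (hx i).le, Real.rpow_two]
    split_ifs <;> simp
  have herase : ∏ i, (if i = i₀ then 1 else x i) = ∏ i ∈ univ.erase i₀, x i := by
    rw [← mul_prod_erase univ _ (mem_univ i₀), if_pos rfl, one_mul]
    exact prod_congr rfl fun i hi => if_neg (ne_of_mem_erase hi)
  calc ∏ i, x i ^ (2 * w i + if i = i₀ then 0 else 1)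
      = (∏ i, (x i ^ 2) ^ w i) * ∏ i ∈ univ.erase i₀, x i := by
        simp_rw [hsplit, prod_mul_distrib, herase]
    _ ≤ (∑ i, x i ^ 2) * ∏ i ∈ univ.erase i₀, x i :=
        mul_le_mul_of_nonneg_right
          (prod_rpow_le_sum _ (fun i _ => hw i) hw₁ fun i _ => sq_nonneg (x i))
          (prod_nonneg fun i _ => (hx i).le)

theorem summable_one_div_sum_sq_mul_prod_erase {ι : Type*} [Fintype ι] [DecidableEq ι] (i₀ : ι) :
    Summable fun n : ι → ℕ+ =>
      1 / ((∑ i, ((n i : ℕ) : ℝ) ^ 2) * ∏ i ∈ univ.erase i₀, ((n i : ℕ) : ℝ)) := by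
  obtain ⟨w, hw, hw₁, hw₀⟩ := exists_weights_gt_half i₀
  have he : ∀ i, 1 < 2 * w i + if i = i₀ then 0 else 1 := by
    intro i
    by_cases h : i = i₀
    · subst h; simp only [if_true]; linarith
    · simp only [h, if_false]; linarith [hw i]
  refine (summable_pnat_prod_rpow_neg he).of_nonneg_of_le (fun n => by positivity) fun n => ?_
  have hx : ∀ i, (0 : ℝ) < ((n i : ℕ) : ℝ) := fun i => Nat.cast_pos.2 (n i).pos
  calc 1 / ((∑ i, ((n i : ℕ) : ℝ) ^ 2) * ∏ i ∈ univ.erase i₀, ((n i : ℕ) : ℝ))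
      ≤ 1 / ∏ i, ((n i : ℕ) : ℝ) ^ (2 * w i + if i = i₀ then 0 else 1) :=
        one_div_le_one_div_of_le (prod_pos fun i _ => Real.rpow_pos_of_pos (hx i) _)
          (prod_rpow_le_sum_sq_mul_prod_erase i₀ (fun i => (hw i).le) hw₁ hx)
    _ = ∏ i, ((n i : ℕ) : ℝ) ^ (-(2 * w i + if i = i₀ then 0 else 1)) := by
        rw [one_div, ← prod_inv_distrib]
        exact prod_congr rfl fun i _ => (Real.rpow_neg (hx i).le _).symm

/-- For every `d ≥ 2`, the series
`∑_{n ∈ (ℤ₊)^d} 1/((n₁² + ⋯ + n_d²) n₂ ⋯ n_d)` over all `d`-tuples of positive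
integers converges, where the product `n₂ ⋯ n_d` ranges over all coordinates
except the first. -/
theorem stmt12 (d : ℕ) (hd : 2 ≤ d) :
    Summable (fun n : Fin d → ℕ+ =>
      1 / ((∑ i, (((n i : ℕ)) : ℝ) ^ 2) *
        ∏ i ∈ Finset.univ.erase (⟨0, by omega⟩ : Fin d), (((n i : ℕ)) : ℝ))) :=
  summable_one_div_sum_sq_mul_prod_erase _
end
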